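/- arXiv:1601.04856 — 2 statements merged into one kernel-verified Lean document; each statement's English description precedes it below -/
import Mathlib

section
/- (Transversal Continuation Principle) Let H be a hypergraph and let A, B ⊆ E(H) be sets of edges. If B ⊆ A, then τ_g(H|A) ≤ τ_g(H|B) and τ_g'(H|A) ≤ τ_g'(H|B). -/
variable {V : Type} [Fintype V] [DecidableEq V]

/-- The set of legal moves in the transversal game with uncovered edge set `E`:
the vertices hitting at least one uncovered edge. -/
def playable (E : Finset (Finset V)) : Finset V :=
  Finset.univ.filter (fun v => ∃ e ∈ E, v ∈ e)

/-- The number of moves remaining in the transversal game with uncovered edge set `E`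
under optimal play, where `ehTurn = true` iff Edge-hitter (the minimizer) moves next;
Staller (the maximizer) moves next iff `ehTurn = false`.  Each move must hit at least
one uncovered edge, and the game ends when no uncovered edge remains. -/
def gameVal (ehTurn : Bool) (E : Finset (Finset V)) : ℕ :=
  if h : (playable E).Nonempty then
    1 +
      (if ehTurn then
        (playable E).attach.inf' (Finset.attach_nonempty_iff.mpr h)
          (fun v => gameVal (!ehTurn) (E.filter (fun e => v.1 ∉ e)))
      else
        (playable E).attach.sup' (Finset.attach_nonempty_iff.mpr h)
          (fun v => gameVal (!ehTurn) (E.filter (fun e => v.1 ∉ e))))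
  else 0
termination_by E.card
decreasing_by
  all_goals
    obtain ⟨v, hv⟩ := v
    simp only [playable, Finset.mem_filter, Finset.mem_univ, true_and] at hv
    obtain ⟨e, he, hve⟩ := hv
    exact Finset.card_lt_card (Finset.filter_ssubset.mpr ⟨e, he, by simp [hve]⟩)

/-- The game transversal number `τ_g`: Edge-hitter makes the first move. -/
def gameTransversalNum (E : Finset (Finset V)) : ℕ := gameVal true E

/-- The Staller-start game transversal number `τ_g'`: Staller makes the first move. -/
def stallerGameTransversalNum (E : Finset (Finset V)) : ℕ := gameVal false E

/-- The transversal number `τ`: the minimum size of a set of vertices meeting all edges. -/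
noncomputable def transversalNum (E : Finset (Finset V)) : ℕ :=
  sInf {n | ∃ T : Finset V, (∀ e ∈ E, ∃ v ∈ T, v ∈ e) ∧ T.card = n}

/-! Both inequalities are proved together with the bounds `τ_g(F) ≤ 1 + τ_g'(G)` and
`τ_g'(F) ≤ 1 + τ_g(G)` for `F ⊆ G`, by strong induction on the uncovered edge set `G`.
This is an imagination strategy: the player of the smaller game copies the moves of
an optimal player of the larger game; a copied move that is illegal in the smaller game hits no
uncovered edge there, so it is simply skipped, at the cost of giving the turn to the opponent. -/

@[simp]
lemma mem_playable {E : Finset (Finset V)} {v : V} : v ∈ playable E ↔ ∃ e ∈ E, v ∈ e := by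
  simp [playable]

lemma playable_mono {F G : Finset (Finset V)} (h : F ⊆ G) : playable F ⊆ playable G :=
  fun _ hv ↦
    let ⟨e, he, hve⟩ := mem_playable.1 hv
    mem_playable.2 ⟨e, h he, hve⟩

lemma filter_notMem_eq_self_of_notMem_playable {E : Finset (Finset V)} {v : V}
    (hv : v ∉ playable E) : E.filter (v ∉ ·) = E :=
  Finset.filter_eq_self.2 fun e he hve ↦ hv (mem_playable.2 ⟨e, he, hve⟩)

lemma filter_notMem_ssubset_of_mem_playable {E : Finset (Finset V)} {v : V}
    (hv : v ∈ playable E) : E.filter (v ∉ ·) ⊂ E :=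
  let ⟨e, he, hve⟩ := mem_playable.1 hv
  Finset.filter_ssubset.2 ⟨e, he, not_not.2 hve⟩

lemma gameVal_of_not_nonempty {E : Finset (Finset V)} (h : ¬ (playable E).Nonempty) (t : Bool) :
    gameVal t E = 0 := by
  rw [gameVal, dif_neg h]

lemma gameVal_true_le {E : Finset (Finset V)} {v : V} (hv : v ∈ playable E) :
    gameVal true E ≤ 1 + gameVal false (E.filter (v ∉ ·)) := by
  rw [gameVal, dif_pos ⟨v, hv⟩, if_pos rfl]
  exact Nat.add_le_add_left (Finset.inf'_le _ (Finset.mem_attach _ ⟨v, hv⟩)) 1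

lemma le_gameVal_false {E : Finset (Finset V)} {v : V} (hv : v ∈ playable E) :
    1 + gameVal true (E.filter (v ∉ ·)) ≤ gameVal false E := by
  conv_rhs => rw [gameVal, dif_pos ⟨v, hv⟩, if_neg Bool.false_ne_true]
  exact Nat.add_le_add_left (Finset.le_sup' (fun w : playable E ↦ gameVal true (E.filter (w.1 ∉ ·)))
    (Finset.mem_attach _ ⟨v, hv⟩)) 1

lemma exists_gameVal_true_eq {E : Finset (Finset V)} (h : (playable E).Nonempty) :
    ∃ v ∈ playable E, gameVal true E = 1 + gameVal false (E.filter (v ∉ ·)) := by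
  obtain ⟨v, -, hv⟩ := Finset.exists_mem_eq_inf' (Finset.attach_nonempty_iff.2 h)
    (fun w : playable E ↦ gameVal false (E.filter (w.1 ∉ ·)))
  refine ⟨v.1, v.2, ?_⟩
  rw [gameVal, dif_pos h, if_pos rfl, Bool.not_true, hv]

lemma exists_gameVal_false_eq {E : Finset (Finset V)} (h : (playable E).Nonempty) :
    ∃ v ∈ playable E, gameVal false E = 1 + gameVal true (E.filter (v ∉ ·)) := by
  obtain ⟨v, -, hv⟩ := Finset.exists_mem_eq_sup' (Finset.attach_nonempty_iff.2 h)
    (fun w : playable E ↦ gameVal true (E.filter (w.1 ∉ ·)))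
  refine ⟨v.1, v.2, ?_⟩
  rw [gameVal, dif_pos h, if_neg Bool.false_ne_true, Bool.not_false, hv]

structure ContinuationBounds (F G : Finset (Finset V)) : Prop where
  true_le : gameVal true F ≤ gameVal true G
  false_le : gameVal false F ≤ gameVal false G
  true_le_one_add : gameVal true F ≤ 1 + gameVal false G
  false_le_one_add : gameVal false F ≤ 1 + gameVal true G

/-- Edge-hitter answers the move `w` in the larger game by `w` itself when it is legal in the
smaller game, and otherwise `w` covers nothing there and the smaller game is one move ahead. -/
lemma gameVal_true_le_of_subset {F G : Finset (Finset V)} {w : V}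
    (ih : ∀ F' ⊆ G.filter (w ∉ ·), ContinuationBounds F' (G.filter (w ∉ ·))) (hFG : F ⊆ G) :
    gameVal true F ≤ 1 + gameVal false (G.filter (w ∉ ·)) := by
  by_cases hw : w ∈ playable F
  · exact (gameVal_true_le hw).trans
      (Nat.add_le_add_left (ih _ (Finset.filter_subset_filter _ hFG)).false_le 1)
  · refine (ih F ?_).true_le_one_add
    rw [← filter_notMem_eq_self_of_notMem_playable hw]
    exact Finset.filter_subset_filter _ hFG

theorem ContinuationBounds.of_subset {F G : Finset (Finset V)} (hFG : F ⊆ G) :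
    ContinuationBounds F G := by
  induction G using Finset.strongInduction generalizing F with
  | H G ih =>
  by_cases hF : (playable F).Nonempty
  swap
  · constructor <;> simp [gameVal_of_not_nonempty hF]
  have ih' (w : V) (hw : w ∈ playable G) (F' : Finset (Finset V)) (h : F' ⊆ G.filter (w ∉ ·)) :
      ContinuationBounds F' (G.filter (w ∉ ·)) :=
    ih _ (filter_notMem_ssubset_of_mem_playable hw) h
  obtain ⟨w, hw, hG_true⟩ := exists_gameVal_true_eq (hF.mono (playable_mono hFG))
  obtain ⟨v, hv, hF_false⟩ := exists_gameVal_false_eq hF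
  have hvG : v ∈ playable G := playable_mono hFG hv
  have hv_sub : F.filter (v ∉ ·) ⊆ G.filter (v ∉ ·) := Finset.filter_subset_filter _ hFG
  constructor
  · rw [hG_true]
    exact gameVal_true_le_of_subset (ih' w hw) hFG
  · calc gameVal false F = 1 + gameVal true (F.filter (v ∉ ·)) := hF_false
      _ ≤ 1 + gameVal true (G.filter (v ∉ ·)) :=
        Nat.add_le_add_left (ih' v hvG _ hv_sub).true_le 1
      _ ≤ gameVal false G := le_gameVal_false hvG
  · calc gameVal true F ≤ 1 + gameVal false (F.filter (v ∉ ·)) := gameVal_true_le hv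
      _ ≤ 1 + (1 + gameVal true (G.filter (v ∉ ·))) :=
        Nat.add_le_add_left (ih' v hvG _ hv_sub).false_le_one_add 1
      _ ≤ 1 + gameVal false G := Nat.add_le_add_left (le_gameVal_false hvG) 1
  · rw [hF_false, hG_true]
    exact Nat.add_le_add_left
      (gameVal_true_le_of_subset (ih' w hw) ((Finset.filter_subset _ _).trans hFG)) 1

theorem transversal_continuation_principle_general
    {V : Type} [Fintype V] [DecidableEq V] (E : Finset (Finset V))
    (A B : Finset (Finset V)) (hBA : B ⊆ A) :
    gameVal true (E \ A) ≤ gameVal true (E \ B) ∧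
      gameVal false (E \ A) ≤ gameVal false (E \ B) :=
  have h := ContinuationBounds.of_subset (sdiff_le_sdiff_left hBA : E \ A ⊆ E \ B)
  ⟨h.true_le, h.false_le⟩

/-- Transversal Continuation Principle: if `B ⊆ A ⊆ E(H)`, then playing the game on the
partially covered hypergraph `H|A` (the edges of `A` already covered, i.e. with uncovered
edge set `E \ A`) finishes no later than on `H|B`, for either player moving first. -/
theorem transversal_continuation_principle
    {V : Type} [Fintype V] [DecidableEq V] (E : Finset (Finset V))
    (hedge : ∀ e ∈ E, e.Nonempty)
    (A B : Finset (Finset V)) (hA : A ⊆ E) (hB : B ⊆ E) (hBA : B ⊆ A) :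
    gameVal true (E \ A) ≤ gameVal true (E \ B) ∧
      gameVal false (E \ A) ≤ gameVal false (E \ B) :=
  transversal_continuation_principle_general E A B hBA
end

section
/- For every hypergraph H, the game transversal number and the Staller-start game transversal number differ by at most one: |τ_g(H) − τ_g'(H)| ≤ 1. -/
variable {V : Type} [Fintype V] [DecidableEq V]

/-!
Both game values are monotone under deleting edges (the continuation principle). Granting this,
the first player may spend a move on any playable vertex `v`; the rest of the game is the game with
the other player starting on a sub-hypergraph, so each value exceeds the other by at most one.
Monotonicity itself is proved for both starting players at once by strong induction on the edge
set. Staller's optimal first move on the smaller hypergraph is also legal on the larger one.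
Edge-hitter on the smaller one copies an optimal first move `v` of the larger one; if `v` is not
legal there, the smaller hypergraph already lies inside the larger one after `v`, and the one-move
bound above (for the smaller edge set, by induction) pays for the missing move.
-/

namespace TransversalGame

variable {E E' : Finset (Finset V)} {v : V}

@[simp]
lemma mem_playable : v ∈ playable E ↔ ∃ e ∈ E, v ∈ e := by
  simp [playable]

lemma playable_mono (h : E' ⊆ E) : playable E' ⊆ playable E := by
  intro v hv
  obtain ⟨e, he, hve⟩ := mem_playable.mp hv
  exact mem_playable.mpr ⟨e, h he, hve⟩

lemma filter_not_mem_ssubset (hv : v ∈ playable E) : E.filter (v ∉ ·) ⊂ E := by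
  obtain ⟨e, he, hve⟩ := mem_playable.mp hv
  exact Finset.filter_ssubset.mpr ⟨e, he, not_not.mpr hve⟩

lemma filter_not_mem_eq_self (hv : v ∉ playable E) : E.filter (v ∉ ·) = E :=
  Finset.filter_true_of_mem fun e he hve => hv (mem_playable.mpr ⟨e, he, hve⟩)

lemma gameVal_eq_zero (b : Bool) (h : ¬(playable E).Nonempty) : gameVal b E = 0 := by
  rw [gameVal]; simp [h]

lemma gameVal_true_eq (h : (playable E).Nonempty) :
    gameVal true E = 1 + (playable E).attach.inf' (Finset.attach_nonempty_iff.mpr h)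
      (fun v => gameVal false (E.filter (v.1 ∉ ·))) := by
  rw [gameVal]; simp [h]

lemma gameVal_false_eq (h : (playable E).Nonempty) :
    gameVal false E = 1 + (playable E).attach.sup' (Finset.attach_nonempty_iff.mpr h)
      (fun v => gameVal true (E.filter (v.1 ∉ ·))) := by
  rw [gameVal]; simp [h]

lemma gameVal_true_le (hv : v ∈ playable E) :
    gameVal true E ≤ 1 + gameVal false (E.filter (v ∉ ·)) := by
  rw [gameVal_true_eq ⟨v, hv⟩]
  exact Nat.add_le_add_left (Finset.inf'_le _ (Finset.mem_attach _ ⟨v, hv⟩)) 1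

lemma le_gameVal_false (hv : v ∈ playable E) :
    1 + gameVal true (E.filter (v ∉ ·)) ≤ gameVal false E := by
  rw [gameVal_false_eq ⟨v, hv⟩]
  exact Nat.add_le_add_left (Finset.le_sup' (fun w : playable E => gameVal true (E.filter (w.1 ∉ ·)))
    (Finset.mem_attach _ ⟨v, hv⟩)) 1

lemma exists_gameVal_true_eq (h : (playable E).Nonempty) :
    ∃ v ∈ playable E, gameVal true E = 1 + gameVal false (E.filter (v ∉ ·)) := by
  obtain ⟨v, -, hv⟩ := Finset.exists_mem_eq_inf' (Finset.attach_nonempty_iff.mpr h)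
    (fun v : playable E => gameVal false (E.filter (v.1 ∉ ·)))
  exact ⟨v.1, v.2, by rw [gameVal_true_eq h, hv]⟩

lemma exists_gameVal_false_eq (h : (playable E).Nonempty) :
    ∃ v ∈ playable E, gameVal false E = 1 + gameVal true (E.filter (v ∉ ·)) := by
  obtain ⟨v, -, hv⟩ := Finset.exists_mem_eq_sup' (Finset.attach_nonempty_iff.mpr h)
    (fun v : playable E => gameVal true (E.filter (v.1 ∉ ·)))
  exact ⟨v.1, v.2, by rw [gameVal_false_eq h, hv]⟩

lemma gameVal_true_le_gameVal_false_add_one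
    (hmono : ∀ E' ⊆ E, gameVal false E' ≤ gameVal false E) :
    gameVal true E ≤ gameVal false E + 1 := by
  by_cases h : (playable E).Nonempty
  · obtain ⟨v, hv⟩ := h
    have := hmono _ (Finset.filter_subset (v ∉ ·) E)
    have := gameVal_true_le hv
    omega
  · simp [gameVal_eq_zero _ h]

lemma gameVal_false_le_gameVal_true_add_one
    (hmono : ∀ E' ⊆ E, gameVal true E' ≤ gameVal true E) :
    gameVal false E ≤ gameVal true E + 1 := by
  by_cases h : (playable E).Nonempty
  · obtain ⟨v, hv, heq⟩ := exists_gameVal_false_eq h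
    have := hmono _ (Finset.filter_subset (v ∉ ·) E)
    omega
  · simp [gameVal_eq_zero _ h]

section MonoStep

variable (ih : ∀ F ⊂ E, ∀ b, ∀ E' ⊆ F, gameVal b E' ≤ gameVal b F)
include ih

lemma gameVal_true_mono_step (hE' : E' ⊆ E) :
    gameVal true E' ≤ gameVal true E := by
  by_cases h' : (playable E').Nonempty
  · obtain ⟨v, hv, heq⟩ := exists_gameVal_true_eq (h'.mono (playable_mono hE'))
    have hsub := filter_not_mem_ssubset hv
    by_cases hv' : v ∈ playable E'
    · have := gameVal_true_le hv'
      have := ih _ hsub false _ (Finset.filter_subset_filter _ hE')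
      omega
    · have hE'v : E' ⊆ E.filter (v ∉ ·) := by
        rw [← filter_not_mem_eq_self hv']
        exact Finset.filter_subset_filter _ hE'
      have := ih _ hsub true _ hE'v
      have := gameVal_true_le_gameVal_false_add_one (ih _ hsub false)
      omega
  · simp [gameVal_eq_zero _ h']

lemma gameVal_false_mono_step (hE' : E' ⊆ E) :
    gameVal false E' ≤ gameVal false E := by
  by_cases h' : (playable E').Nonempty
  · obtain ⟨w, hw', heq⟩ := exists_gameVal_false_eq h'
    have hw := playable_mono hE' hw'
    have := ih _ (filter_not_mem_ssubset hw) true _ (Finset.filter_subset_filter _ hE')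
    have := le_gameVal_false hw
    omega
  · simp [gameVal_eq_zero _ h']

end MonoStep

theorem gameVal_mono (b : Bool) (h : E' ⊆ E) : gameVal b E' ≤ gameVal b E := by
  induction E using Finset.strongInduction generalizing E' b with
  | H E ih =>
    have ih' : ∀ F ⊂ E, ∀ b, ∀ E' ⊆ F, gameVal b E' ≤ gameVal b F :=
      fun F hF b _ hE' => ih F hF b hE'
    cases b
    · exact gameVal_false_mono_step ih' h
    · exact gameVal_true_mono_step ih' h

end TransversalGame

open TransversalGame in
theorem abs_gameTransversalNum_sub_stallerGameTransversalNum_le_one_general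
    {V : Type} [Fintype V] [DecidableEq V] (E : Finset (Finset V)) :
    |(gameTransversalNum E : ℤ) - (stallerGameTransversalNum E : ℤ)| ≤ 1 := by
  have h₁ := gameVal_true_le_gameVal_false_add_one fun _ h => gameVal_mono false (E := E) h
  have h₂ := gameVal_false_le_gameVal_true_add_one fun _ h => gameVal_mono true (E := E) h
  rw [gameTransversalNum, stallerGameTransversalNum, abs_le]
  omega

/-- For every hypergraph `H`, `|τ_g(H) - τ_g'(H)| ≤ 1`. -/
theorem abs_gameTransversalNum_sub_stallerGameTransversalNum_le_one
    {V : Type} [Fintype V] [DecidableEq V] (E : Finset (Finset V))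
    (hedge : ∀ e ∈ E, e.Nonempty) :
    |(gameTransversalNum E : ℤ) - (stallerGameTransversalNum E : ℤ)| ≤ 1 :=
  abs_gameTransversalNum_sub_stallerGameTransversalNum_le_one_general E
end
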